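/- arXiv:quant-ph/0506265 — 3 statements merged into one kernel-verified Lean document; each statement's English description precedes it below -/
import Mathlib

section
/- Let P be the transition matrix of a finite ergodic reversible Markov chain with nonnegative eigenvalues, stationary distribution π, and second largest eigenvalue λ. For any time t and any state u, λ^t ≤ Δ(t)/min_u π(u), where Δ(t) is the maximum over starting states x of the total variation distance between the t-step distribution P^t_x and π. -/
open Finset in
/-- Sinclair's bound: for a finite ergodic reversible Markov chain `P` with
stationary distribution `π` and a nonnegative eigenvalue `lam < 1`
(in particular the second largest one), `lam ^ t ≤ Δ(t) / min_u π(u)`,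
where `Δ(t) = max_x ‖P^t_x − π‖_TV`. -/
theorem eigenvalue_pow_le_tv {V : Type*} [Fintype V] [Nonempty V] [DecidableEq V]
    (P : Matrix V V ℝ)
    (hPnonneg : ∀ x y, 0 ≤ P x y) (hProw : ∀ x, ∑ y, P x y = 1)
    (π : V → ℝ) (hπpos : ∀ x, 0 < π x) (hπsum : ∑ x, π x = 1)
    (hstat : ∀ y, ∑ x, π x * P x y = π y)
    (hrev : ∀ x y, π x * P x y = π y * P y x)
    (lam : ℝ) (hlam0 : 0 ≤ lam) (hlam1 : lam < 1)
    (hev : ∃ f : V → ℝ, f ≠ 0 ∧ P.mulVec f = lam • f)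
    (t : ℕ) :
    lam ^ t ≤ (⨆ x : V, (1 / 2) * ∑ y, |(P ^ t) x y - π y|) / (⨅ x : V, π x) := by
  obtain ⟨f, hf0, hf⟩ := hev
  have hmv : ∀ (M : Matrix V V ℝ) (x : V), M.mulVec f x = ∑ y, M x y * f y :=
    fun M x => rfl
  have hPf : ∀ x, P.mulVec f x = lam * f x := fun x => by rw [hf]; rfl
  -- V is nontrivial
  rcases subsingleton_or_nontrivial V with hsub | hnt
  · exfalso
    obtain ⟨x, hx⟩ := Function.ne_iff.mp hf0
    have h2 : P.mulVec f x = f x := by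
      rw [hmv, Fintype.sum_subsingleton (fun y => P x y * f y) x]
      have h3 := hProw x
      rw [Fintype.sum_subsingleton (fun y => P x y) x] at h3
      rw [h3, one_mul]
    have := hPf x
    rw [h2] at this
    have : (lam - 1) * f x = 0 := by ring_nf; linarith
    rcases mul_eq_zero.mp this with h | h
    · linarith [sub_eq_zero.mp (by linarith : lam - 1 = 0)]
    · exact hx h
  -- f is π-orthogonal to constants
  have hS0 : ∑ y, π y * f y = 0 := by
    have h1 : ∑ x, π x * P.mulVec f x = ∑ y, π y * f y := by
      simp_rw [hmv, Finset.mul_sum, ← mul_assoc]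
      rw [Finset.sum_comm]
      refine Finset.sum_congr rfl fun y _ => ?_
      rw [← Finset.sum_mul, hstat y]
    have h2 : ∑ x, π x * P.mulVec f x = lam * ∑ y, π y * f y := by
      simp_rw [hPf, Finset.mul_sum]
      refine Finset.sum_congr rfl fun x _ => by ring
    have h3 : (lam - 1) * ∑ y, π y * f y = 0 := by
      rw [h2] at h1; ring_nf; linarith
    rcases mul_eq_zero.mp h3 with h | h
    · exact absurd (by linarith : lam = 1) (by linarith)
    · exact h
  -- P^t f = lam^t f
  have hpow : (P ^ t).mulVec f = (lam ^ t) • f := by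
    induction t with
    | zero => simp [Matrix.one_mulVec]
    | succ n ih =>
      rw [pow_succ, ← Matrix.mulVec_mulVec, hf, Matrix.mulVec_smul, ih,
        smul_smul, pow_succ]
      ring_nf
  -- pick u maximizing |f u|
  obtain ⟨u, hu⟩ := Finite.exists_max (fun x => |f x|)
  have hfu : 0 < |f u| := by
    obtain ⟨x, hx⟩ := Function.ne_iff.mp hf0
    exact lt_of_lt_of_le (abs_pos.mpr hx) (hu x)
  have h1 : lam ^ t * f u = ∑ y, ((P ^ t) u y - π y) * f y := by
    have h := congrFun hpow u
    rw [hmv] at h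
    simp_rw [sub_mul]
    rw [Finset.sum_sub_distrib, hS0, sub_zero, h]
    rfl
  have key : lam ^ t * |f u| ≤ (∑ y, |(P ^ t) u y - π y|) * |f u| := by
    calc lam ^ t * |f u| = |lam ^ t * f u| := by
          rw [abs_mul, abs_of_nonneg (pow_nonneg hlam0 t)]
      _ = |∑ y, ((P ^ t) u y - π y) * f y| := by rw [h1]
      _ ≤ ∑ y, |((P ^ t) u y - π y) * f y| := Finset.abs_sum_le_sum_abs _ _
      _ = ∑ y, |(P ^ t) u y - π y| * |f y| := by simp [abs_mul]
      _ ≤ ∑ y, |(P ^ t) u y - π y| * |f u| :=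
          Finset.sum_le_sum fun y _ =>
            mul_le_mul_of_nonneg_left (hu y) (abs_nonneg _)
      _ = (∑ y, |(P ^ t) u y - π y|) * |f u| := (Finset.sum_mul _ _ _).symm
  have hmain : lam ^ t ≤ ∑ y, |(P ^ t) u y - π y| :=
    le_of_mul_le_mul_right key hfu
  set S := ⨆ x : V, (1 / 2 : ℝ) * ∑ y, |(P ^ t) x y - π y| with hSdef
  have hterm_le : (1 / 2 : ℝ) * ∑ y, |(P ^ t) u y - π y| ≤ S :=
    le_ciSup (f := fun x : V => (1 / 2 : ℝ) * ∑ y, |(P ^ t) x y - π y|)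
      (Set.Finite.bddAbove (Set.finite_range _)) u
  have hS_nonneg : (0 : ℝ) ≤ S := by
    refine le_trans ?_ hterm_le
    positivity
  have hlamS : lam ^ t ≤ 2 * S := by
    calc lam ^ t ≤ ∑ y, |(P ^ t) u y - π y| := hmain
      _ = 2 * ((1 / 2 : ℝ) * ∑ y, |(P ^ t) u y - π y|) := by ring
      _ ≤ 2 * S := by linarith
  set m := ⨅ x : V, π x with hmdef
  have hm_pos : 0 < m := by
    obtain ⟨x0, hx0⟩ := Finite.exists_min π
    exact lt_of_lt_of_le (hπpos x0) (le_ciInf hx0)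
  have hm_half : m ≤ 1 / 2 := by
    obtain ⟨a, b, hab⟩ := exists_pair_ne V
    have ha : m ≤ π a := ciInf_le (Set.Finite.bddBelow (Set.finite_range _)) a
    have hb : m ≤ π b := ciInf_le (Set.Finite.bddBelow (Set.finite_range _)) b
    have hsum : π a + π b ≤ 1 := by
      rw [← hπsum]
      have := Finset.sum_le_sum_of_subset_of_nonneg
        (Finset.subset_univ ({a, b} : Finset V)) (fun x _ _ => (hπpos x).le)
      rwa [Finset.sum_pair hab] at this
    linarith
  refine hlamS.trans ?_
  rw [le_div_iff₀ hm_pos]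
  nlinarith
end

section
/- For any finite ergodic Markov chain with only nonnegative eigenvalues, the spectral gap 1 − λ is at least 1/(4eT), where λ is the second largest eigenvalue and T is the coupling time of any valid coupling of the chain. -/
open Finset in
lemma aux_mulVec_mono {n : Type*} [Fintype n] (M : Matrix n n ℝ)
    (hM : ∀ i j, 0 ≤ M i j) {u v : n → ℝ} (huv : ∀ i, u i ≤ v i) (i : n) :
    M.mulVec u i ≤ M.mulVec v i := by
  simp only [Matrix.mulVec, dotProduct]
  exact Finset.sum_le_sum fun j _ => mul_le_mul_of_nonneg_left (huv j) (hM i j)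

open Finset in
lemma aux_pow_nonneg {n : Type*} [Fintype n] [DecidableEq n] (M : Matrix n n ℝ)
    (hM : ∀ i j, 0 ≤ M i j) : ∀ t, ∀ i j, 0 ≤ (M ^ t) i j := by
  intro t
  induction t with
  | zero =>
    intro i j
    simp only [pow_zero, Matrix.one_apply]
    split <;> norm_num
  | succ t ih =>
    intro i j
    rw [pow_succ, Matrix.mul_apply]
    exact Finset.sum_nonneg fun k _ => mul_nonneg (ih i k) (hM k j)

lemma aux_exp_neg_le (x : ℝ) (h0 : 0 ≤ x) (h1 : x ≤ 1) :
    Real.exp (-x) ≤ 1 - x / 2 := by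
  have h1x : 0 < 1 + x := by linarith
  have hexp : 1 + x ≤ Real.exp x := by linarith [Real.add_one_le_exp x]
  have step1 : Real.exp (-x) ≤ (1 + x)⁻¹ := by
    rw [Real.exp_neg]
    exact inv_anti₀ h1x hexp
  have h2 : 1 ≤ (1 - x / 2) * (1 + x) := by nlinarith
  have step2 : (1 + x)⁻¹ ≤ 1 - x / 2 := by
    rw [inv_eq_one_div, div_le_iff₀ h1x]
    linarith
  linarith

open Finset in
/-- For a finite ergodic Markov chain `P` with nonnegative eigenvalues, and any
valid coupling `Q` of the chain with coupling time `T` (the maximum over initial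
pairs of the expected time `h (u,v)` for the coupled states to coincide), every
nonnegative eigenvalue `lam < 1` of `P` — in particular the second largest —
satisfies `1 − lam ≥ 1/(4eT)`. -/
theorem spectral_gap_ge_inv_coupling_time {V : Type*} [Fintype V] [Nonempty V]
    [DecidableEq V]
    (P : Matrix V V ℝ)
    (hPnonneg : ∀ x y, 0 ≤ P x y) (hProw : ∀ x, ∑ y, P x y = 1)
    (π : V → ℝ) (hπpos : ∀ x, 0 < π x) (hπsum : ∑ x, π x = 1)
    (hstat : ∀ y, ∑ x, π x * P x y = π y)
    -- `Q` is a coupling of the chain with itself: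
    (Q : Matrix (V × V) (V × V) ℝ)
    (hQnonneg : ∀ z w, 0 ≤ Q z w)
    (hmarg1 : ∀ u v w, ∑ v', Q (u, v) (w, v') = P u w)
    (hmarg2 : ∀ u v v', ∑ w, Q (u, v) (w, v') = P v v')
    (hdiag : ∀ u w v', Q (u, u) (w, v') ≠ 0 → w = v')
    -- `h (u,v)` is the expected time to coalescence and `T` the coupling time:
    (h : V × V → ℝ)
    (hh0 : ∀ u, h (u, u) = 0)
    (hhrec : ∀ u v, u ≠ v → h (u, v) = 1 + ∑ z, Q (u, v) z * h z)
    (T : ℝ) (hT : T = ⨆ z : V × V, h z)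
    -- `lam` is a nonnegative eigenvalue of `P` other than `1`:
    (lam : ℝ) (hlam0 : 0 ≤ lam) (hlam1 : lam < 1)
    (hev : ∃ f : V → ℝ, f ≠ 0 ∧ P.mulVec f = lam • f) :
    1 / (4 * Real.exp 1 * T) ≤ 1 - lam := by
  classical
  obtain ⟨f, hf0, hfe⟩ := hev
  have he1 : (1 : ℝ) < Real.exp 1 := by
    have := Real.exp_one_gt_d9; linarith
  -- f is nonconstant
  have hfnc : ∃ u v : V, f u ≠ f v := by
    by_contra hc
    push_neg at hc
    apply hf0
    funext u
    have h1 : P.mulVec f u = f u := by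
      simp only [Matrix.mulVec, dotProduct]
      calc ∑ w, P u w * f w = ∑ w, P u w * f u :=
            Finset.sum_congr rfl fun w _ => by rw [hc w u]
        _ = f u := by rw [← Finset.sum_mul, hProw u, one_mul]
    have h2 : P.mulVec f u = lam * f u := by rw [hfe]; rfl
    have : (1 - lam) * f u = 0 := by rw [h1] at h2; linarith [h2]
    rcases mul_eq_zero.mp this with hh | hh
    · exfalso; linarith
    · exact hh
  obtain ⟨u₀, v₀, hfuv⟩ := hfnc
  have huv0 : u₀ ≠ v₀ := fun hh => hfuv (by rw [hh])
  -- row sums of Q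
  have hQrow : ∀ z : V × V, ∑ w, Q z w = 1 := by
    rintro ⟨u, v⟩
    rw [Fintype.sum_prod_type]
    calc ∑ a, ∑ b, Q (u, v) (a, b) = ∑ a, P u a :=
          Finset.sum_congr rfl fun a _ => hmarg1 u v a
      _ = 1 := hProw u
  -- h is nonnegative
  have hh_nonneg : ∀ z, 0 ≤ h z := by
    obtain ⟨zm, hzm⟩ := Finite.exists_min h
    intro z
    rcases eq_or_ne zm.1 zm.2 with hd | hd
    · have h0 : h zm = 0 := by
        obtain ⟨a, b⟩ := zm
        simp only at hd
        subst hd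
        exact hh0 a
      calc (0:ℝ) = h zm := h0.symm
        _ ≤ h z := hzm z
    · exfalso
      have h1 : h zm = 1 + ∑ w, Q zm w * h w := by
        obtain ⟨a, b⟩ := zm
        exact hhrec a b hd
      have h2 : h zm ≤ ∑ w, Q zm w * h w := by
        calc h zm = ∑ w, Q zm w * h zm := by
              rw [← Finset.sum_mul, hQrow zm, one_mul]
          _ ≤ ∑ w, Q zm w * h w :=
              Finset.sum_le_sum fun w _ =>
                mul_le_mul_of_nonneg_left (hzm w) (hQnonneg zm w)
      linarith
  -- h is bounded by T
  have hhT : ∀ z, h z ≤ T := by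
    intro z; rw [hT]
    exact le_ciSup (Set.Finite.bddAbove (Set.finite_range h)) z
  -- T ≥ 1
  have hT1 : 1 ≤ T := by
    have hr := hhrec u₀ v₀ huv0
    have hs : 0 ≤ ∑ z, Q (u₀, v₀) z * h z :=
      Finset.sum_nonneg fun z _ => mul_nonneg (hQnonneg _ z) (hh_nonneg z)
    have := hhT (u₀, v₀)
    linarith
  have hTpos : 0 < T := by linarith
  -- the indicator of the off-diagonal and the coupled-difference function
  set χ : V × V → ℝ := fun z => if z.1 = z.2 then 0 else 1 with hχdef
  set g : V × V → ℝ := fun z => |f z.1 - f z.2| with hgdef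
  have hχ01 : ∀ z, 0 ≤ χ z ∧ χ z ≤ 1 := by
    intro z; simp only [hχdef]; split <;> norm_num
  have hg_nonneg : ∀ z, 0 ≤ g z := fun z => abs_nonneg _
  obtain ⟨z₀, hz₀⟩ := Finite.exists_max g
  set c := g z₀ with hcdef
  have hcpos : 0 < c := by
    have h1 : 0 < g (u₀, v₀) := by
      simp only [hgdef]
      exact abs_pos.mpr (sub_ne_zero.mpr hfuv)
    exact lt_of_lt_of_le h1 (hz₀ (u₀, v₀))
  -- g ≤ c • χ
  have hgχ : ∀ z, g z ≤ c * χ z := by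
    rintro ⟨a, b⟩
    rcases eq_or_ne a b with hd | hd
    · subst hd
      simp only [hgdef, hχdef, if_pos rfl, mul_zero, sub_self, abs_zero, le_refl]
    · simp only [hχdef, if_neg hd, mul_one]
      exact hz₀ (a, b)
  -- Q contracts χ
  have hQχ : ∀ z, Q.mulVec χ z ≤ χ z := by
    rintro ⟨a, b⟩
    rcases eq_or_ne a b with hd | hd
    · subst hd
      have : Q.mulVec χ (a, a) = 0 := by
        simp only [Matrix.mulVec, dotProduct]
        refine Finset.sum_eq_zero fun w _ => ?_
        obtain ⟨p, q⟩ := w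
        rcases eq_or_ne (Q (a, a) (p, q)) 0 with h0 | h0
        · rw [h0, zero_mul]
        · have := hdiag a p q h0
          subst this
          simp [hχdef]
      rw [this]
      simp [hχdef]
    · simp only [hχdef, if_neg hd]
      calc Q.mulVec χ (a, b) ≤ Q.mulVec (fun _ => (1:ℝ)) (a, b) :=
            aux_mulVec_mono Q hQnonneg (fun z => (hχ01 z).2) _
        _ = 1 := by
            simp only [Matrix.mulVec, dotProduct, mul_one]
            exact hQrow (a, b)
  -- eigenvalue inequality: lam * g ≤ Q g
  have hQg : ∀ z, lam * g z ≤ Q.mulVec g z := by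
    rintro ⟨u, v⟩
    have hA : ∑ w : V × V, Q (u, v) w * f w.1 = lam * f u := by
      rw [Fintype.sum_prod_type]
      calc ∑ a, ∑ b, Q (u, v) (a, b) * f a = ∑ a, P u a * f a := by
            refine Finset.sum_congr rfl fun a _ => ?_
            rw [← Finset.sum_mul, hmarg1 u v a]
        _ = lam * f u := by
            have := congrFun hfe u
            simpa [Matrix.mulVec, dotProduct] using this
    have hB : ∑ w : V × V, Q (u, v) w * f w.2 = lam * f v := by
      rw [Fintype.sum_prod_type, Finset.sum_comm]
      calc ∑ b, ∑ a, Q (u, v) (a, b) * f b = ∑ b, P v b * f b := by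
            refine Finset.sum_congr rfl fun b _ => ?_
            rw [← Finset.sum_mul, hmarg2 u v b]
        _ = lam * f v := by
            have := congrFun hfe v
            simpa [Matrix.mulVec, dotProduct] using this
    have key : lam * (f u - f v) = ∑ w : V × V, Q (u, v) w * (f w.1 - f w.2) := by
      have : ∑ w : V × V, Q (u, v) w * (f w.1 - f w.2)
          = (∑ w : V × V, Q (u, v) w * f w.1) - ∑ w : V × V, Q (u, v) w * f w.2 := by
        rw [← Finset.sum_sub_distrib]
        exact Finset.sum_congr rfl fun w _ => mul_sub _ _ _
      rw [this, hA, hB, mul_sub]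
    calc lam * g (u, v) = |lam * (f u - f v)| := by
          rw [abs_mul, abs_of_nonneg hlam0]
      _ = |∑ w : V × V, Q (u, v) w * (f w.1 - f w.2)| := by rw [key]
      _ ≤ ∑ w : V × V, |Q (u, v) w * (f w.1 - f w.2)| :=
          Finset.abs_sum_le_sum_abs _ _
      _ = ∑ w : V × V, Q (u, v) w * g w :=
          Finset.sum_congr rfl fun w _ => by
            rw [abs_mul, abs_of_nonneg (hQnonneg _ w)]
      _ = Q.mulVec g (u, v) := by
          simp [Matrix.mulVec, dotProduct]
  -- iterate: lam^t * g ≤ (Q^t) g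
  have hPowg : ∀ t : ℕ, ∀ z, lam ^ t * g z ≤ (Q ^ t).mulVec g z := by
    intro t
    induction t with
    | zero => intro z; simp [Matrix.one_mulVec]
    | succ t ih =>
      intro z
      have h1 : lam ^ (t + 1) * g z = lam * (lam ^ t * g z) := by ring
      have h2 : lam * (lam ^ t * g z) ≤ lam * ((Q ^ t).mulVec g z) :=
        mul_le_mul_of_nonneg_left (ih z) hlam0
      have h3 : lam * ((Q ^ t).mulVec g z) = (Q ^ t).mulVec (lam • g) z := by
        rw [Matrix.mulVec_smul]; rfl
      have h4 : (Q ^ t).mulVec (lam • g) z ≤ (Q ^ t).mulVec (Q.mulVec g) z :=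
        aux_mulVec_mono _ (aux_pow_nonneg Q hQnonneg t) (fun w => hQg w) z
      have h5 : (Q ^ t).mulVec (Q.mulVec g) z = (Q ^ (t + 1)).mulVec g z := by
        rw [Matrix.mulVec_mulVec, ← pow_succ]
      linarith
  -- (Q^t) χ is antitone in t
  have hAstep : ∀ t : ℕ, ∀ z, (Q ^ (t + 1)).mulVec χ z ≤ (Q ^ t).mulVec χ z := by
    intro t z
    have h5 : (Q ^ (t + 1)).mulVec χ z = (Q ^ t).mulVec (Q.mulVec χ) z := by
      rw [Matrix.mulVec_mulVec, ← pow_succ]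
    rw [h5]
    exact aux_mulVec_mono _ (aux_pow_nonneg Q hQnonneg t) hQχ z
  have hAanti : ∀ s t : ℕ, s ≤ t → ∀ z, (Q ^ t).mulVec χ z ≤ (Q ^ s).mulVec χ z := by
    intro s t hst
    induction t with
    | zero =>
      intro z
      have : s = 0 := Nat.le_zero.mp hst
      subst this; exact le_refl _
    | succ t ih =>
      intro z
      rcases Nat.lt_or_ge s (t + 1) with hlt | hge
      · have hst' : s ≤ t := Nat.lt_succ_iff.mp hlt
        exact le_trans (hAstep t z) (ih hst' z)
      · have : s = t + 1 := le_antisymm hst hge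
        subst this; exact le_refl _
  -- the recursion h = χ + Q h
  have hrecχ : ∀ z, χ z + Q.mulVec h z = h z := by
    rintro ⟨a, b⟩
    rcases eq_or_ne a b with hd | hd
    · subst hd
      have hmv : Q.mulVec h (a, a) = 0 := by
        simp only [Matrix.mulVec, dotProduct]
        refine Finset.sum_eq_zero fun w _ => ?_
        obtain ⟨p, q⟩ := w
        rcases eq_or_ne (Q (a, a) (p, q)) 0 with h0 | h0
        · rw [h0, zero_mul]
        · have := hdiag a p q h0
          subst this
          rw [hh0 p, mul_zero]
      rw [hmv, hh0 a]
      simp [hχdef]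
    · have := hhrec a b hd
      simp only [hχdef, if_neg hd]
      rw [this]
      simp [Matrix.mulVec, dotProduct]
  -- telescoping: sum of (Q^s)χ + (Q^t)h = h
  have htel : ∀ t : ℕ, ∀ z,
      (∑ s ∈ Finset.range t, (Q ^ s).mulVec χ z) + (Q ^ t).mulVec h z = h z := by
    intro t
    induction t with
    | zero => intro z; simp [Matrix.one_mulVec]
    | succ t ih =>
      intro z
      have hsplit : (Q ^ t).mulVec h z
          = (Q ^ t).mulVec χ z + (Q ^ (t + 1)).mulVec h z := by
        have h1 : (Q ^ t).mulVec h z = (Q ^ t).mulVec (fun w => χ w + Q.mulVec h w) z := by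
          congr 1
          funext w
          rw [hrecχ w]
        have h2 : (Q ^ t).mulVec (fun w => χ w + Q.mulVec h w) z
            = (Q ^ t).mulVec χ z + (Q ^ t).mulVec (Q.mulVec h) z := by
          have := Matrix.mulVec_add (Q ^ t) χ (Q.mulVec h)
          calc (Q ^ t).mulVec (fun w => χ w + Q.mulVec h w) z
              = (Q ^ t).mulVec (χ + Q.mulVec h) z := rfl
            _ = (Q ^ t).mulVec χ z + (Q ^ t).mulVec (Q.mulVec h) z := by
                rw [this]; rfl
        have h3 : (Q ^ t).mulVec (Q.mulVec h) z = (Q ^ (t + 1)).mulVec h z := by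
          rw [Matrix.mulVec_mulVec, ← pow_succ]
        rw [h1, h2, h3]
      rw [Finset.sum_range_succ]
      have := ih z
      linarith [hsplit]
  -- t * (Q^t)χ z ≤ T
  have hkey : ∀ t : ℕ, ∀ z, (t : ℝ) * (Q ^ t).mulVec χ z ≤ T := by
    intro t z
    have h1 : (t : ℝ) * (Q ^ t).mulVec χ z ≤ ∑ s ∈ Finset.range t, (Q ^ s).mulVec χ z := by
      calc (t : ℝ) * (Q ^ t).mulVec χ z
          = ∑ _s ∈ Finset.range t, (Q ^ t).mulVec χ z := by
            rw [Finset.sum_const, Finset.card_range, nsmul_eq_mul]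
        _ ≤ ∑ s ∈ Finset.range t, (Q ^ s).mulVec χ z :=
            Finset.sum_le_sum fun s hs =>
              hAanti s t (Nat.le_of_lt (Finset.mem_range.mp hs)) z
    have h2 : 0 ≤ (Q ^ t).mulVec h z := by
      simp only [Matrix.mulVec, dotProduct]
      exact Finset.sum_nonneg fun w _ =>
        mul_nonneg (aux_pow_nonneg Q hQnonneg t z w) (hh_nonneg w)
    have h3 := htel t z
    have h4 := hhT z
    linarith
  -- lam^t ≤ T / t via evaluation at z₀
  have hlamt : ∀ t : ℕ, (t : ℝ) * lam ^ t ≤ T := by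
    intro t
    have h1 : lam ^ t * c ≤ (Q ^ t).mulVec g z₀ := by
      have := hPowg t z₀
      linarith [this]
    have h2 : (Q ^ t).mulVec g z₀ ≤ c * (Q ^ t).mulVec χ z₀ := by
      have hm : (Q ^ t).mulVec g z₀ ≤ (Q ^ t).mulVec (c • χ) z₀ :=
        aux_mulVec_mono _ (aux_pow_nonneg Q hQnonneg t) (fun w => hgχ w) z₀
      have hs : (Q ^ t).mulVec (c • χ) z₀ = c * (Q ^ t).mulVec χ z₀ := by
        rw [Matrix.mulVec_smul]; rfl
      linarith [hm, hs.le, hs.ge]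
    have h3 : lam ^ t ≤ (Q ^ t).mulVec χ z₀ := by
      have := le_trans h1 h2
      have hcc : lam ^ t * c ≤ (Q ^ t).mulVec χ z₀ * c := by
        calc lam ^ t * c ≤ c * (Q ^ t).mulVec χ z₀ := this
          _ = (Q ^ t).mulVec χ z₀ * c := mul_comm _ _
      exact le_of_mul_le_mul_right hcc hcpos
    calc (t : ℝ) * lam ^ t ≤ (t : ℝ) * (Q ^ t).mulVec χ z₀ :=
          mul_le_mul_of_nonneg_left h3 (Nat.cast_nonneg t)
      _ ≤ T := hkey t z₀
  -- numerical endgame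
  set e := Real.exp 1 with hedef
  have hepos : 0 < e := by linarith
  have h4eT : 0 < 4 * e * T := by positivity
  rcases eq_or_lt_of_le hlam0 with hl0 | hlpos
  · -- lam = 0
    rw [← hl0]
    rw [sub_zero, div_le_one h4eT]
    nlinarith
  · set t₀ : ℕ := ⌈e * T⌉₊ with ht₀def
    have heT1 : 1 ≤ e * T := by nlinarith
    have ht₀ge : e * T ≤ (t₀ : ℝ) := Nat.le_ceil _
    have ht₀le : (t₀ : ℝ) ≤ 2 * e * T := by
      have := Nat.ceil_lt_add_one (by positivity : (0:ℝ) ≤ e * T)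
      have : (t₀ : ℝ) < e * T + 1 := this
      nlinarith
    have ht₀pos : 0 < t₀ := by
      rw [ht₀def]
      exact Nat.ceil_pos.mpr (by positivity)
    have ht₀posR : (0 : ℝ) < (t₀ : ℝ) := by exact_mod_cast ht₀pos
    have hlt : lam ^ t₀ ≤ Real.exp (-1) := by
      have h1 := hlamt t₀
      have h2 : lam ^ t₀ ≤ T / t₀ := by
        rw [le_div_iff₀ ht₀posR]
        linarith [h1]
      have h3 : T / (t₀ : ℝ) ≤ 1 / e := by
        rw [div_le_div_iff₀ ht₀posR hepos]
        nlinarith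
      have h4 : (1 : ℝ) / e = Real.exp (-1) := by
        rw [Real.exp_neg, hedef, inv_eq_one_div]
      linarith
    -- lam ≤ exp (-1/t₀)
    have hloglam : Real.log lam ≤ -1 / (t₀ : ℝ) := by
      have h1 : (t₀ : ℝ) * Real.log lam ≤ -1 := by
        have := Real.log_le_log (by positivity) hlt
        rw [Real.log_pow, Real.log_exp] at this
        exact_mod_cast this
      rw [le_div_iff₀ ht₀posR]
      linarith [h1, mul_comm (t₀:ℝ) (Real.log lam)]
    have hlame : lam ≤ Real.exp (-(1 / (2 * e * T))) := by
      have h1 : -1 / (t₀ : ℝ) ≤ -(1 / (2 * e * T)) := by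
        rw [neg_div, neg_le_neg_iff]
        exact div_le_div_of_nonneg_left one_pos.le ht₀posR ht₀le
      calc lam = Real.exp (Real.log lam) := (Real.exp_log hlpos).symm
        _ ≤ Real.exp (-(1 / (2 * e * T))) :=
            Real.exp_le_exp.mpr (le_trans hloglam h1)
    have hx1 : 1 / (2 * e * T) ≤ 1 := by
      rw [div_le_one (by positivity)]
      nlinarith
    have hx0 : 0 ≤ 1 / (2 * e * T) := by positivity
    have hfinal := aux_exp_neg_le (1 / (2 * e * T)) hx0 hx1
    have hhalf : 1 / (2 * e * T) / 2 = 1 / (4 * e * T) := by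
      field_simp
      ring
    rw [hhalf] at hfinal
    linarith [le_trans hlame hfinal]
end

section
/- Consider the coupled process on pairs of injective l-tuples over {1,...,k} (with l ≤ k/2) evolving by the lazy walk: with probability 1/2 do nothing; otherwise pick uniform position i ∈ {1,...,l} and uniform index j ∈ {1,...,k}, and apply the same (i,j) update to both tuples (if j occurs in the tuple at position m, swap entries i and m; else set entry i to j). If the Hamming distance between the two tuples is d > 0, then in one step the distance never increases and decreases by at least 1 with probability at least d/(2l). -/
open Finset in
/-- One (non-lazy) update of the walk on injective `l`-tuples over `{1,…,k}`:
given a position `i` and an index `j`, if `j` already occurs in the tuple at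
some position `m`, swap the entries at positions `i` and `m`; otherwise set the
entry at position `i` to `j`. -/
noncomputable def walkStep {l k : ℕ} (u : Fin l → Fin k) (i : Fin l) (j : Fin k) :
    Fin l → Fin k :=
  if h : ∃ m, u m = j then u ∘ (Equiv.swap i h.choose) else Function.update u i j

open Finset

private lemma walkStep_pos {l k : ℕ} (u : Fin l → Fin k) (i : Fin l) (j : Fin k)
    (h : ∃ m, u m = j) : walkStep u i j = u ∘ (Equiv.swap i h.choose) := by
  rw [walkStep, dif_pos h]

private lemma walkStep_pos' {l k : ℕ} {u : Fin l → Fin k} (hu : Function.Injective u)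
    (i : Fin l) {j : Fin k} {m : Fin l} (hm : u m = j) :
    walkStep u i j = u ∘ (Equiv.swap i m) := by
  have h : ∃ m, u m = j := ⟨m, hm⟩
  rw [walkStep_pos u i j h, hu (h.choose_spec.trans hm.symm)]

private lemma walkStep_neg {l k : ℕ} (u : Fin l → Fin k) (i : Fin l) (j : Fin k)
    (h : ¬ ∃ m, u m = j) : walkStep u i j = Function.update u i j := by
  rw [walkStep, dif_neg h]

private lemma walkStep_self {l k : ℕ} (u : Fin l → Fin k) (i : Fin l) (j : Fin k) :
    walkStep u i j i = j := by
  by_cases h : ∃ m, u m = j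
  · rw [walkStep_pos u i j h]
    simp [Equiv.swap_apply_left, h.choose_spec]
  · rw [walkStep_neg u i j h]
    simp

private lemma step_subset {l k : ℕ} {u v : Fin l → Fin k}
    (hu : Function.Injective u) (hv : Function.Injective v) (i : Fin l) (j : Fin k)
    (hJ : ¬ ∃ m, u m = j ∧ v m = j) :
    ∀ a, walkStep u i j a ≠ walkStep v i j a → u a ≠ v a ∧ a ≠ i := by
  intro a ha
  have hai : a ≠ i := by
    rintro rfl
    exact ha ((walkStep_self u a j).trans (walkStep_self v a j).symm)
  refine ⟨?_, hai⟩
  by_cases hA : ∃ m, u m = j <;> by_cases hB : ∃ m, v m = j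
  · -- j in both ranges
    obtain ⟨m, hm⟩ := hA
    obtain ⟨m', hm'⟩ := hB
    rw [walkStep_pos' hu i hm, walkStep_pos' hv i hm'] at ha
    have hmm : m ≠ m' := by
      rintro rfl; exact hJ ⟨m, hm, hm'⟩
    rcases eq_or_ne a m with rfl | ham
    · -- a = m
      intro hc
      apply hmm
      apply hv
      rw [← hc, hm, hm']
    · rcases eq_or_ne a m' with rfl | ham'
      · intro hc
        apply hmm
        apply hu
        rw [hc, hm, hm']
      · -- a ∉ {i, m, m'}: unchanged
        simpa [Function.comp, Equiv.swap_apply_of_ne_of_ne hai ham,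
          Equiv.swap_apply_of_ne_of_ne hai ham'] using ha
  · obtain ⟨m, hm⟩ := hA
    rw [walkStep_pos' hu i hm, walkStep_neg v i j hB] at ha
    rcases eq_or_ne a m with rfl | ham
    · intro hc
      exact hB ⟨a, by rw [← hc, hm]⟩
    · simpa [Function.comp, Equiv.swap_apply_of_ne_of_ne hai ham,
        Function.update_of_ne hai] using ha
  · obtain ⟨m', hm'⟩ := hB
    rw [walkStep_neg u i j hA, walkStep_pos' hv i hm'] at ha
    rcases eq_or_ne a m' with rfl | ham'
    · intro hc
      exact hA ⟨a, by rw [hc, hm']⟩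
    · simpa [Function.comp, Equiv.swap_apply_of_ne_of_ne hai ham',
        Function.update_of_ne hai] using ha
  · rw [walkStep_neg u i j hA, walkStep_neg v i j hB] at ha
    simpa [Function.update_of_ne hai] using ha

private lemma step_dec {l k : ℕ} {u v : Fin l → Fin k}
    (hu : Function.Injective u) (hv : Function.Injective v) (i : Fin l) (j : Fin k)
    (hij : u i ≠ v i) (hJ : ¬ ∃ m, u m = j ∧ v m = j) :
    hammingDist (walkStep u i j) (walkStep v i j) + 1 ≤ hammingDist u v := by
  have hsub : (univ.filter fun a => walkStep u i j a ≠ walkStep v i j a) ⊆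
      (univ.filter fun a => u a ≠ v a).erase i := by
    intro a ha
    simp only [mem_filter, mem_univ, true_and] at ha
    obtain ⟨h1, h2⟩ := step_subset hu hv i j hJ a ha
    simp [Finset.mem_erase, h1, h2]
  have hmem : i ∈ (univ.filter fun a => u a ≠ v a) := by simp [hij]
  have h1 := Finset.card_le_card hsub
  rw [Finset.card_erase_of_mem hmem] at h1
  have h2 : 1 ≤ (univ.filter fun a => u a ≠ v a).card := Finset.card_pos.2 ⟨i, hmem⟩
  show (univ.filter fun a => walkStep u i j a ≠ walkStep v i j a).card + 1 ≤
    (univ.filter fun a => u a ≠ v a).card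
  omega

private lemma step_le {l k : ℕ} {u v : Fin l → Fin k}
    (hu : Function.Injective u) (hv : Function.Injective v) (i : Fin l) (j : Fin k) :
    hammingDist (walkStep u i j) (walkStep v i j) ≤ hammingDist u v := by
  by_cases hJ : ∃ m, u m = j ∧ v m = j
  · obtain ⟨m, hm1, hm2⟩ := hJ
    have hA : ∃ m, u m = j := ⟨m, hm1⟩
    have hB : ∃ m, v m = j := ⟨m, hm2⟩
    rw [walkStep_pos' hu i hm1, walkStep_pos' hv i hm2]
    exact le_of_eq (by
      simp only [hammingDist, Function.comp]
      exact Finset.card_nbij' ((Equiv.swap i m) ·) ((Equiv.swap i m).symm ·)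
        (by intro a ha; simpa using ha) (by intro a ha; simpa using ha)
        (by intro a _; simp) (by intro a _; simp))
  · apply Finset.card_le_card
    intro a ha
    simp only [mem_filter, mem_univ, true_and] at ha ⊢
    exact (step_subset hu hv i j hJ a ha).1

open Finset in
/-- In the coupled lazy walk on pairs of injective `l`-tuples over `{1,…,k}`
(with `2l ≤ k`), applying the same update `(i,j)` to both tuples never increases
the Hamming distance, and if the current distance is `d > 0` then the fraction
of updates `(i,j)` that decrease the distance by at least `1` is at least
`d/(2l)`; since the lazy step moves with probability `1/2` (and otherwise leaves
both tuples, hence the distance, unchanged), the distance decreases with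
probability at least `d/(2l)` overall (the paper's bound `d/l · 1/2`). -/
theorem coupling_distance_decreases {l k : ℕ} (hl : 1 ≤ l) (hlk : 2 * l ≤ k)
    (u v : Fin l → Fin k) (hu : Function.Injective u) (hv : Function.Injective v)
    (hd : 0 < hammingDist u v) :
    (∀ (i : Fin l) (j : Fin k),
        hammingDist (walkStep u i j) (walkStep v i j) ≤ hammingDist u v) ∧
      ((hammingDist u v : ℝ) / (2 * l) ≤
        ((univ ×ˢ univ).filter (fun p : Fin l × Fin k =>
            hammingDist (walkStep u p.1 p.2) (walkStep v p.1 p.2) + 1 ≤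
              hammingDist u v)).card / ((l : ℝ) * k)) := by
  refine ⟨fun i j => step_le hu hv i j, ?_⟩
  set F := (univ ×ˢ univ).filter (fun p : Fin l × Fin k =>
      hammingDist (walkStep u p.1 p.2) (walkStep v p.1 p.2) + 1 ≤ hammingDist u v) with hF
  set D := (univ.filter fun a => u a ≠ v a) with hDdef
  set M := (univ.filter fun a => u a = v a) with hMdef
  set J := M.image u with hJdef
  have hDcard : hammingDist u v = D.card := rfl
  -- the good set
  have hS : D ×ˢ (univ \ J) ⊆ F := by
    intro p hp
    rw [Finset.mem_product] at hp
    obtain ⟨hp1, hp2⟩ := hp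
    rw [hDdef, mem_filter] at hp1
    rw [Finset.mem_sdiff, hJdef] at hp2
    have hJ' : ¬ ∃ m, u m = p.2 ∧ v m = p.2 := by
      rintro ⟨m, h1, h2⟩
      exact hp2.2 (Finset.mem_image.2 ⟨m, by simp [hMdef, h1.trans h2.symm], h1⟩)
    rw [hF, mem_filter]
    exact ⟨by simp, step_dec hu hv p.1 p.2 hp1.2 hJ'⟩
  have hScard : (D ×ˢ (univ \ J)).card = D.card * (k - J.card) := by
    rw [Finset.card_product, Finset.card_sdiff_of_subset (Finset.subset_univ J)]
    simp
  have hFcard : D.card * (k - J.card) ≤ F.card := by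
    rw [← hScard]; exact Finset.card_le_card hS
  have hJM : J.card ≤ M.card := Finset.card_image_le
  have hMD : M.card + D.card = l := by
    have := Finset.card_filter_add_card_filter_not
      (s := (univ : Finset (Fin l))) (p := fun a => u a = v a)
    simpa [hMdef, hDdef] using this
  have hd' : 1 ≤ D.card := hd
  -- arithmetic
  have hJk : J.card ≤ k := le_trans hJM (by omega)
  have hkey : D.card * (l * k) ≤ F.card * (2 * l) := by
    have h1 : D.card * (l * k) ≤ (D.card * (k - J.card)) * (2 * l) := by
      have h2 : l * k ≤ (k - J.card) * (2 * l) := by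
        have hk2 : k ≤ 2 * (k - J.card) := by omega
        calc l * k ≤ l * (2 * (k - J.card)) := Nat.mul_le_mul_left l hk2
          _ = (k - J.card) * (2 * l) := by ring
      calc D.card * (l * k) ≤ D.card * ((k - J.card) * (2 * l)) :=
            Nat.mul_le_mul_left _ h2
        _ = (D.card * (k - J.card)) * (2 * l) := by ring
    exact le_trans h1 (Nat.mul_le_mul_right _ hFcard)
  have hl0 : (0:ℝ) < l := by exact_mod_cast hl
  have hk0 : (0:ℝ) < k := by
    have : 0 < k := by omega
    exact_mod_cast this
  rw [div_le_div_iff₀ (by positivity) (by positivity)]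
  calc (hammingDist u v : ℝ) * ((l:ℝ) * k) = ((D.card * (l * k) : ℕ) : ℝ) := by
        rw [hDcard]; push_cast; ring
    _ ≤ ((F.card * (2 * l) : ℕ) : ℝ) := by exact_mod_cast hkey
    _ = (F.card : ℝ) * (2 * l) := by push_cast; ring
end
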